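/- arXiv:2304.10462 — 2 statements merged into one kernel-verified Lean document; each statement's English description precedes it below -/
import Mathlib

section
/- The braid matrix B = F R F (where R = diag(e^{-4πi/5}, e^{3πi/5}) and F is the Fibonacci F-matrix) is unitary and satisfies the Yang–Baxter-type relation R B R = B R B on the two-dimensional fusion space. -/
open Matrix

noncomputable def goldenRatio' : ℝ := (1 + Real.sqrt 5) / 2

noncomputable def fibFC : Matrix (Fin 2) (Fin 2) ℂ :=
  !![(goldenRatio'⁻¹ : ℂ), ((Real.sqrt goldenRatio'⁻¹ : ℝ) : ℂ);
     ((Real.sqrt goldenRatio'⁻¹ : ℝ) : ℂ), -(goldenRatio'⁻¹ : ℂ)]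

noncomputable def fibR : Matrix (Fin 2) (Fin 2) ℂ :=
  !![Complex.exp (-4 * Real.pi * Complex.I / 5), 0;
     0, Complex.exp (3 * Real.pi * Complex.I / 5)]

noncomputable def fibB : Matrix (Fin 2) (Fin 2) ℂ := fibFC * fibR * fibFC

namespace FibAux
open Complex Real

noncomputable def s : ℂ := Complex.exp (3 * Real.pi * Complex.I / 5)
noncomputable def a : ℂ := (goldenRatio'⁻¹ : ℂ)
noncomputable def b : ℂ := ((Real.sqrt goldenRatio'⁻¹ : ℝ) : ℂ)

lemma h5R : Real.sqrt 5 ^ 2 = 5 := Real.sq_sqrt (by norm_num)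

lemma hgpos : (0:ℝ) < goldenRatio' := by
  rw [goldenRatio']
  positivity

lemma hginv : goldenRatio'⁻¹ = (Real.sqrt 5 - 1) / 2 := by
  have h : goldenRatio' * ((Real.sqrt 5 - 1) / 2) = 1 := by
    rw [goldenRatio']
    nlinarith [h5R]
  exact inv_eq_of_mul_eq_one_right h

lemma ha2R : (goldenRatio'⁻¹ : ℝ) ^ 2 = 1 - goldenRatio'⁻¹ := by
  rw [hginv]
  nlinarith [h5R]

lemma ha2 : a ^ 2 = 1 - a := by
  rw [a]
  exact_mod_cast ha2R

lemma hb2 : b ^ 2 = a := by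
  rw [a, b]
  have : Real.sqrt goldenRatio'⁻¹ ^ 2 = goldenRatio'⁻¹ :=
    Real.sq_sqrt (le_of_lt (inv_pos.mpr hgpos))
  exact_mod_cast this

lemma hs5 : s ^ 5 = -1 := by
  rw [s, ← Complex.exp_nat_mul]
  have : ((5:ℕ):ℂ) * (3 * (Real.pi:ℂ) * Complex.I / 5) = (Real.pi:ℂ) * Complex.I + 2 * (Real.pi:ℂ) * Complex.I := by
    push_cast; ring
  rw [this, Complex.exp_add, Complex.exp_pi_mul_I, Complex.exp_two_pi_mul_I]
  ring

lemma hs4 : s ^ 4 = Complex.exp (2 * (Real.pi:ℂ) * Complex.I / 5) := by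
  rw [s, ← Complex.exp_nat_mul]
  have : ((4:ℕ):ℂ) * (3 * (Real.pi:ℂ) * Complex.I / 5) = 2 * (Real.pi:ℂ) * Complex.I / 5 + 2 * (Real.pi:ℂ) * Complex.I := by
    push_cast; ring
  rw [this, Complex.exp_add, Complex.exp_two_pi_mul_I, mul_one]

lemma hR00 : Complex.exp (-4 * (Real.pi:ℂ) * Complex.I / 5) = s ^ 2 := by
  rw [s, ← Complex.exp_nat_mul]
  have : ((2:ℕ):ℂ) * (3 * (Real.pi:ℂ) * Complex.I / 5) = -4 * (Real.pi:ℂ) * Complex.I / 5 + 2 * (Real.pi:ℂ) * Complex.I := by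
    push_cast; ring
  rw [this, Complex.exp_add, Complex.exp_two_pi_mul_I, mul_one]

lemma hcos : Real.cos (2 * Real.pi / 5) = (Real.sqrt 5 - 1) / 4 := by
  have h := Real.cos_two_mul (Real.pi / 5)
  rw [Real.cos_pi_div_five] at h
  have e : 2 * (Real.pi / 5) = 2 * Real.pi / 5 := by ring
  rw [e] at h
  rw [h]
  nlinarith [h5R]

lemma ha : a = s ^ 4 - s := by
  have h1 : s = -Complex.exp (-(2 * (Real.pi:ℂ) * Complex.I / 5)) := by
    rw [s]
    have : 3 * (Real.pi:ℂ) * Complex.I / 5 = (Real.pi:ℂ) * Complex.I + -(2 * (Real.pi:ℂ) * Complex.I / 5) := by ring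
    rw [this, Complex.exp_add, Complex.exp_pi_mul_I]
    ring
  have e1 : (2 * (Real.pi:ℂ) * Complex.I / 5) = ((2 * Real.pi / 5 : ℝ) : ℂ) * Complex.I := by
    push_cast; ring
  have e2 : (-(2 * (Real.pi:ℂ) * Complex.I / 5)) = ((-(2 * Real.pi / 5) : ℝ) : ℂ) * Complex.I := by
    push_cast; ring
  rw [hs4, h1, e2, e1, Complex.exp_mul_I, Complex.exp_mul_I]
  rw [← Complex.ofReal_cos, ← Complex.ofReal_sin, ← Complex.ofReal_cos, ← Complex.ofReal_sin]
  rw [Real.cos_neg, Real.sin_neg, hcos]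
  rw [a, ← Complex.ofReal_inv, hginv]
  push_cast
  ring

lemma hquart : s ^ 4 - s ^ 3 + s ^ 2 - s + 1 = 0 := by
  linear_combination ha2 - (a + s ^ 4 - s + 1) * ha - (s ^ 3 - 2) * hs5

lemma hconj_s : (starRingEnd ℂ) s = -s ^ 4 := by
  rw [s, ← Complex.exp_conj]
  have e1 : (starRingEnd ℂ) (3 * (Real.pi:ℂ) * Complex.I / 5) = -(3 * (Real.pi:ℂ) * Complex.I / 5) := by
    simp [map_div₀, Complex.conj_I, Complex.conj_ofReal, map_ofNat]
    ring
  rw [e1, ← Complex.exp_nat_mul]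
  have e2 : ((4:ℕ):ℂ) * (3 * (Real.pi:ℂ) * Complex.I / 5) = -(3 * (Real.pi:ℂ) * Complex.I / 5) + (Real.pi:ℂ) * Complex.I + 2 * (Real.pi:ℂ) * Complex.I := by
    push_cast; ring
  rw [e2, Complex.exp_add, Complex.exp_add, Complex.exp_pi_mul_I, Complex.exp_two_pi_mul_I]
  ring

lemma hconj_a : (starRingEnd ℂ) a = a := by
  rw [a]; push_cast; rw [map_inv₀, Complex.conj_ofReal]

lemma hconj_b : (starRingEnd ℂ) b = b := by
  rw [b]; exact Complex.conj_ofReal _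

lemma hFC : fibFC = !![a, b; b, -a] := rfl

lemma hRR : fibR = !![s ^ 2, 0; 0, s] := by
  rw [fibR, show (-4 * Real.pi * Complex.I / 5 : ℂ) = -4 * (Real.pi:ℂ) * Complex.I / 5 by push_cast; ring, hR00]
  rfl

lemma hB : fibB = !![a ^ 2 * s ^ 2 + b ^ 2 * s, a * b * s ^ 2 - a * b * s;
                     a * b * s ^ 2 - a * b * s, b ^ 2 * s ^ 2 + a ^ 2 * s] := by
  rw [fibB, hFC, hRR, Matrix.mul_fin_two, Matrix.mul_fin_two]
  congr 1 <;> ring_nf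

end FibAux

open FibAux in
theorem fibB_unitary_yangBaxter :
    fibB ∈ Matrix.unitaryGroup (Fin 2) ℂ ∧
    fibR * fibB * fibR = fibB * fibR * fibB := by
  constructor
  · rw [Matrix.mem_unitaryGroup_iff, Matrix.star_eq_conjTranspose, hB]
    ext i j
    fin_cases i <;> fin_cases j <;>
      simp [Matrix.mul_apply, Fin.sum_univ_two, Matrix.conjTranspose_apply,
            Matrix.one_apply, _root_.map_add, _root_.map_sub, _root_.map_mul, _root_.map_pow,
            hconj_s, hconj_a, hconj_b]
    · linear_combination (s^10 * a^2 + (-1) * s^5 * a^2 + (-1) * s^5 * a + (-1) * s^5 * b^2) * hb2 + (s^22 + (-3) * s^19 + s^18 * a + s^18 + (3) * s^16 + (-2) * s^15 * a + (-2) * s^15 + s^14 * a^2 + s^14 * a + (-2) * s^13 + s^12 * a + s^12 + (-1) * s^11 * a^2 + (-1) * s^11 * a + s^10 * a^3 + s^10 * a^2 + (2) * s^10 + (-1) * s^9 * a + (-1) * s^9 + (-1) * s^7 + s^6 * a + s^6 + (-1) * s^5 * a^2 + (-1) * s^5 * a) * ha + (s^22 + s^21 + (-4) * s^19 + (-3)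 * s^18 + (5) * s^16 + (3) * s^15 + s^14 + (-2) * s^13 + (-2) * s^12 + (-2) * s^11 + s^10 + s^9 + (-1) * s^7 + s^6 + s^5 + (-1) * s + (-1)) * hquart
    · linear_combination (s^10 * a * b + s^5 * a * b) * hb2 + (s^18 * b + (-2) * s^15 * b + s^14 * a * b + s^14 * b + s^13 * b + s^12 * b + (-1) * s^11 * a * b + (-1) * s^11 * b + s^10 * a^2 * b + s^10 * a * b + (-2) * s^10 * b + s^9 * a * b + s^9 * b + s^7 * b + (-1) * s^6 * a * b + (-1) * s^6 * b + s^5 * a^2 * b + s^5 * a * b) * ha + (s^18 * b + s^17 * b + (-3) * s^15 * b + (-2) * s^14 * b + s^13 * b + (3) * s^12 * b + s^11 * b + (-2) * s^10 * b + (-1) * s^9 * b + s^7 * b) * hquart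
    · linear_combination (s^10 * a * b + s^5 * a * b) * hb2 + (s^18 * b + (-2) * s^15 * b + s^14 * a * b + s^14 * b + s^13 * b + s^12 * b + (-1) * s^11 * a * b + (-1) * s^11 * b + s^10 * a^2 * b + s^10 * a * b + (-2) * s^10 * b + s^9 * a * b + s^9 * b + s^7 * b + (-1) * s^6 * a * b + (-1) * s^6 * b + s^5 * a^2 * b + s^5 * a * b) * ha + (s^18 * b + s^17 * b + (-3) * s^15 * b + (-2) * s^14 * b + s^13 * b + (3) * s^12 * b + s^11 * b + (-2) * s^10 * b + (-1) * s^9 * b + s^7 * b) * hquart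
    · linear_combination (s^10 * a^2 + s^10 * a + s^10 * b^2 + (-1) * s^5 * a^2) * hb2 + (s^18 + (-1) * s^17 + (-2) * s^15 + s^14 * a + (4) * s^14 + (-1) * s^13 * a + (-1) * s^13 + s^12 + (-1) * s^11 * a + (-4) * s^11 + s^10 * a^2 + (3) * s^10 * a + (2) * s^10 + (-1) * s^9 * a^2 + (-1) * s^9 * a + s^8 + (-1) * s^7 * a + (-1) * s^7 + s^6 * a^2 + s^6 * a + (-1) * s^5 * a^3 + (-1) * s^5 * a^2) * ha + (s^18 + (-1) * s^16 + (-3) * s^15 + (2) * s^14 + (3) * s^13 + (2) * s^12 + (-4) * s^11 + (-2) * s^10 + s^8 + s^6 + s^5 + (-1) * s + (-1)) * hquart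
  · rw [hB, hRR]
    ext i j
    fin_cases i <;> fin_cases j <;>
      simp [Matrix.mul_apply, Fin.sum_univ_two]
    · linear_combination ((-3) * s^5 * a^2 + s^5 + (2) * s^4 * a^2 + (-1) * s^4 * a + (-1) * s^4 * b^2 + (-1) * s^3 * a^2) * hb2 + ((-1) * s^18 + (3) * s^15 + (-1) * s^14 * a + (-3) * s^13 + (-1) * s^12 + (2) * s^11 * a + (-1) * s^11 + (-1) * s^10 * a^2 + (7) * s^10 + (-3) * s^9 * a + (-3) * s^9 + s^8 * a + s^8 + s^7 * a^2 + (-1) * s^7 * a + (-4) * s^7 + (-1) * s^6 * a^3 + (4) * s^6 * a + (2) * s^6 + (-3) * s^5 * a^2 + (-2) * s^5 * a + s^5 + (2) * s^4 * a^2 + (-1) * s^3 * a^2) * ha + ((-1) * s^18 + (-1) * s^17 + (4) * s^15 + (4) * s^14 + (-2) * s^13 + (-6) * s^12 + (-5) * s^11 + (5) * s^10 + (4) * s^9 + (2) * s^8 + (-3) * s^7 + (-1) * s^6) * hquart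
    · linear_combination ((-2) * s^5 * a * b + (2) * s^4 * a * b) * hb2 + ((-1) * s^14 * b + s^13 * b + (-1) * s^12 * b + (3) * s^11 * b + (-1) * s^10 * a * b + (-2) * s^10 * b + s^9 * a * b + (-1) * s^8 * a * b + (-1) * s^8 * b + (2) * s^7 * a * b + s^7 * b + (-1) * s^6 * a^2 * b + (-1) * s^6 * a * b + s^6 * b + s^5 * a^2 * b + (-1) * s^5 * a * b + (-1) * s^4 * a^2 * b + s^4 * a * b + (-1) * s^4 * b + s^3 * a^2 * b) * ha + ((-1) * s^14 * b + (3) * s^11 * b + s^10 * b + (-1) * s^9 * b + (-3) * s^8 * b + (-1) * s^7 * b + s^6 * b + s^5 * b) * hquart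
    · linear_combination ((-2) * s^5 * a * b + (2) * s^4 * a * b) * hb2 + ((-1) * s^14 * b + s^13 * b + (-1) * s^12 * b + (3) * s^11 * b + (-1) * s^10 * a * b + (-2) * s^10 * b + s^9 * a * b + (-1) * s^8 * a * b + (-1) * s^8 * b + (2) * s^7 * a * b + s^7 * b + (-1) * s^6 * a^2 * b + (-1) * s^6 * a * b + s^6 * b + s^5 * a^2 * b + (-1) * s^5 * a * b + (-1) * s^4 * a^2 * b + s^4 * a * b + (-1) * s^4 * b + s^3 * a^2 * b) * ha + ((-1) * s^14 * b + (3) * s^11 * b + s^10 * b + (-1) * s^9 * b + (-3) * s^8 * b + (-1) * s^7 * b + s^6 * b + s^5 * b) * hquart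
    · linear_combination ((-1) * s^6 * a^2 + (2) * s^5 * a^2 + (-1) * s^5 * a + (-1) * s^5 * b^2 + (-3) * s^4 * a^2 + s^4) * hb2 + ((-1) * s^15 + (-1) * s^14 + (2) * s^13 + (-1) * s^11 * a + (2) * s^11 + (-1) * s^10 * a + (-4) * s^10 + (2) * s^9 * a + (2) * s^9 + (-1) * s^8 * a + (-1) * s^8 + (-1) * s^7 * a^2 + s^7 * a + (3) * s^7 + (-1) * s^6 * a^2 + (-2) * s^6 * a + (-1) * s^6 + (2) * s^5 * a^2 + s^5 * a + (-2) * s^4 * a^2 + (-1) * s^3 * a^3 + s^3 * a) * ha + ((-1) * s^15 + (-2) * s^14 + s^13 + (3) * s^12 + (4) * s^11 + (-2) * s^10 + (-2) * s^9 + (-2) * s^8 + s^7) * hquart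
end

section
/- For three Fibonacci anyons with total charge τ (a 2-dimensional fusion space), the braid group representation ρ: B₃ → U(2) defined by ρ(σ₁) = R and ρ(σ₂) = F R F satisfies the braid relation ρ(σ₁)ρ(σ₂)ρ(σ₁) = ρ(σ₂)ρ(σ₁)ρ(σ₂). -/
open Matrix

private lemma braid_key (A S z w : ℂ) (h2 : S^2 = A) (h3 : z^5 = 1)
    (h6 : z^4+z^3+z^2+z+1 = 0) (h7 : A = z^2+z^3) (hw : w = -z^3) :
    !![z,0;0,w] * (!![A,S;S,-A] * !![z,0;0,w] * !![A,S;S,-A]) * !![z,0;0,w] =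
    (!![A,S;S,-A] * !![z,0;0,w] * !![A,S;S,-A]) * !![z,0;0,w] *
      (!![A,S;S,-A] * !![z,0;0,w] * !![A,S;S,-A]) := by
  subst hw
  ext i j
  fin_cases i <;> fin_cases j <;>
    simp [Matrix.mul_apply, Fin.sum_univ_succ]
  · linear_combination ((-1)*z^5 + (-1)*S^2*z^7 + (-1)*A*z^7 + (3)*A^2*z^5 + (2)*A^2*z^7 + (1)*A^2*z^9) * h2 + ((6) + (6)*z + (6)*z^2 + (6)*z^3 + (6)*z^4 + (6)*z^5 + (6)*z^6 + (6)*z^7 + (5)*z^8 + (5)*z^9 + (6)*z^10 + (5)*z^11 + (3)*z^12 + (1)*z^13) * h3 + ((6)) * h6 + ((1)*z^6 + (1)*z^9 + (2)*z^10 + (2)*z^11 + (3)*z^12 + (3)*z^13 + (2)*z^14 + (1)*z^15 + (1)*A*z^3 + (1)*A*z^7 + (1)*A*z^8 + (1)*A*z^9 + (2)*A*z^10 + (1)*A*z^11 + (1)*A*z^12 + (2)*A^2*z^5 + (-1)*A^2*z^6 + (2)*A^2*z^7 + (1)*A^2*z^9 + (-1)*A^3*z^3) * h7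
  · linear_combination ((2)*A*S*z^5 + (2)*A*S*z^7) * h2 + ((-4)*S + (-4)*S*z + (-4)*S*z^2 + (-4)*S*z^3 + (-4)*S*z^4 + (-4)*S*z^5 + (-4)*S*z^6 + (-3)*S*z^7 + (-3)*S*z^8 + (-4)*S*z^9 + (-4)*S*z^10 + (-4)*S*z^11 + (-3)*S*z^12 + (-1)*S*z^13) * h3 + ((-4)*S) * h6 + ((-1)*S*z^5 + (-2)*S*z^11 + (-2)*S*z^12 + (-2)*S*z^13 + (-2)*S*z^14 + (-1)*S*z^15 + (1)*A*S*z^5 + (-1)*A*S*z^6 + (1)*A*S*z^7 + (-1)*A*S*z^8 + (-1)*A*S*z^9 + (-1)*A*S*z^10 + (-1)*A*S*z^11 + (-1)*A*S*z^12 + (-1)*A^2*S*z^3 + (-1)*A^2*S*z^5 + (-1)*A^2*S*z^7 + (-1)*A^2*S*z^9) * h7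
  · linear_combination ((2)*A*S*z^5 + (2)*A*S*z^7) * h2 + ((-4)*S + (-4)*S*z + (-4)*S*z^2 + (-4)*S*z^3 + (-4)*S*z^4 + (-4)*S*z^5 + (-4)*S*z^6 + (-3)*S*z^7 + (-3)*S*z^8 + (-4)*S*z^9 + (-4)*S*z^10 + (-4)*S*z^11 + (-3)*S*z^12 + (-1)*S*z^13) * h3 + ((-4)*S) * h6 + ((-1)*S*z^5 + (-2)*S*z^11 + (-2)*S*z^12 + (-2)*S*z^13 + (-2)*S*z^14 + (-1)*S*z^15 + (1)*A*S*z^5 + (-1)*A*S*z^6 + (1)*A*S*z^7 + (-1)*A*S*z^8 + (-1)*A*S*z^9 + (-1)*A*S*z^10 + (-1)*A*S*z^11 + (-1)*A*S*z^12 + (-1)*A^2*S*z^3 + (-1)*A^2*S*z^5 + (-1)*A^2*S*z^7 + (-1)*A^2*S*z^9) * h7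
  · linear_combination ((1)*z^7 + (1)*S^2*z^5 + (1)*A*z^5 + (-1)*A^2*z^3 + (-2)*A^2*z^5 + (-3)*A^2*z^7) * h2 + ((-6) + (-6)*z + (-6)*z^2 + (-6)*z^3 + (-6)*z^4 + (-6)*z^5 + (-6)*z^6 + (-6)*z^7 + (-6)*z^8 + (-7)*z^9 + (-6)*z^10 + (-2)*z^11 + (1)*z^12 + (4)*z^13 + (6)*z^14 + (4)*z^15 + (1)*z^16) * h3 + ((-6)) * h6 + ((1)*z^7 + (-1)*z^8 + (-3)*z^9 + (-4)*z^10 + (-6)*z^11 + (-7)*z^12 + (-3)*z^13 + (1)*z^15 + (3)*z^16 + (3)*z^17 + (1)*z^18 + (-1)*A*z^6 + (-2)*A*z^7 + (-2)*A*z^8 + (-4)*A*z^9 + (-3)*A*z^10 + (1)*A*z^13 + (2)*A*z^14 + (1)*A*z^15 + (-1)*A^2*z^3 + (-2)*A^2*z^5 + (-3)*A^2*z^7 + (1)*A^2*z^11 + (1)*A^2*z^12 + (1)*A^3*z^9) * h7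

private lemma R_unitary (u v : ℂ) (hu : u * (starRingEnd ℂ) u = 1)
    (hv : v * (starRingEnd ℂ) v = 1) :
    !![u, 0; 0, v] ∈ Matrix.unitaryGroup (Fin 2) ℂ := by
  rw [Matrix.mem_unitaryGroup_iff]
  ext i j
  fin_cases i <;> fin_cases j <;>
    simp [Matrix.mul_apply, Fin.sum_univ_succ, Matrix.star_apply, hu, hv]

private lemma F_unitary (a s : ℝ) (h : a*a + s*s = 1) :
    !![(a:ℂ), (s:ℂ); (s:ℂ), -(a:ℂ)] ∈ Matrix.unitaryGroup (Fin 2) ℂ := by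
  rw [Matrix.mem_unitaryGroup_iff]
  ext i j
  fin_cases i <;> fin_cases j <;>
    simp [Matrix.mul_apply, Fin.sum_univ_succ, Matrix.star_apply, Complex.conj_ofReal]
  · norm_cast
  · ring
  · ring
  · norm_cast
    linear_combination h

private lemma exp_mul_conj_self (x : ℂ) (hx : x + (starRingEnd ℂ) x = 0) :
    Complex.exp x * (starRingEnd ℂ) (Complex.exp x) = 1 := by
  rw [← Complex.exp_conj, ← Complex.exp_add, hx, Complex.exp_zero]

/-- The braid-group representation on the 2-dimensional fusion space of three
Fibonacci anyons with total charge τ: `ρ(σ₁) = R`, `ρ(σ₂) = F R F` are unitary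
and satisfy the braid relation. -/
theorem fib_braid_representation :
    fibR ∈ Matrix.unitaryGroup (Fin 2) ℂ ∧
    fibB ∈ Matrix.unitaryGroup (Fin 2) ℂ ∧
    fibR * fibB * fibR = fibB * fibR * fibB := by
  have hs5 : Real.sqrt 5 ^ 2 = 5 := Real.sq_sqrt (by norm_num)
  have hs5nn : (0:ℝ) ≤ Real.sqrt 5 := Real.sqrt_nonneg 5
  have hg_pos : 0 < goldenRatio' := by unfold goldenRatio'; positivity
  have hginv : goldenRatio'⁻¹ = (Real.sqrt 5 - 1)/2 := by
    have h : goldenRatio' * ((Real.sqrt 5 - 1)/2) = 1 := by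
      unfold goldenRatio'; nlinarith [hs5]
    exact inv_eq_of_mul_eq_one_right h
  have hcos : Real.cos (2*Real.pi/5) = (Real.sqrt 5 - 1)/4 := by
    have h2 : Real.cos (2*(Real.pi/5)) = 2 * Real.cos (Real.pi/5)^2 - 1 := Real.cos_two_mul _
    rw [show 2*Real.pi/5 = 2*(Real.pi/5) by ring, h2, Real.cos_pi_div_five]
    linear_combination (1/8) * hs5
  have hA_val : goldenRatio'⁻¹ = 2 * Real.cos (2*Real.pi/5) := by rw [hginv, hcos]; ring
  set z : ℂ := Complex.exp (-4 * Real.pi * Complex.I / 5) with hz_def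
  have hz2 : z^2 = Complex.exp (((2*Real.pi/5 : ℝ) : ℂ) * Complex.I) := by
    rw [hz_def, sq, ← Complex.exp_add,
      show (-4 * (Real.pi:ℂ) * Complex.I / 5 + -4 * (Real.pi:ℂ) * Complex.I / 5)
        = ((2*Real.pi/5 : ℝ) : ℂ) * Complex.I + -(2 * (Real.pi:ℂ) * Complex.I) by push_cast; ring,
      Complex.exp_add, Complex.exp_neg, Complex.exp_two_pi_mul_I]
    simp
  have hz3 : z^3 = Complex.exp (((-(2*Real.pi/5) : ℝ) : ℂ) * Complex.I) := by
    rw [hz_def, pow_succ, pow_succ, pow_one, ← Complex.exp_add, ← Complex.exp_add,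
      show (-4 * (Real.pi:ℂ) * Complex.I / 5 + -4 * (Real.pi:ℂ) * Complex.I / 5 + -4 * (Real.pi:ℂ) * Complex.I / 5)
        = ((-(2*Real.pi/5) : ℝ) : ℂ) * Complex.I + -(2 * (Real.pi:ℂ) * Complex.I) by push_cast; ring,
      Complex.exp_add, Complex.exp_neg, Complex.exp_two_pi_mul_I]
    simp
  have h7 : ((goldenRatio'⁻¹ : ℝ) : ℂ) = z^2 + z^3 := by
    rw [hz2, hz3, Complex.exp_mul_I, Complex.exp_mul_I, Complex.ofReal_neg, Complex.cos_neg,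
      Complex.sin_neg, ← Complex.ofReal_cos, hA_val]
    push_cast
    ring
  have h3 : z^5 = 1 := by
    rw [hz_def, ← Complex.exp_nat_mul,
      show ((5:ℕ):ℂ) * (-4 * (Real.pi:ℂ) * Complex.I / 5) = ((-2:ℤ):ℂ) * (2*(Real.pi:ℂ)*Complex.I) by push_cast; ring]
    exact Complex.exp_int_mul_two_pi_mul_I (-2)
  have hz_ne : z ≠ 1 := by
    intro h
    have him : z.im = Real.sin (-(4*Real.pi/5)) := by
      rw [hz_def, show (-4 * (Real.pi:ℂ) * Complex.I / 5) = ((-(4*Real.pi/5) : ℝ) : ℂ) * Complex.I by push_cast; ring]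
      exact Complex.exp_ofReal_mul_I_im _
    have hpos : 0 < Real.sin (4*Real.pi/5) :=
      Real.sin_pos_of_pos_of_lt_pi (by positivity) (by nlinarith [Real.pi_pos])
    rw [h] at him
    simp only [Complex.one_im] at him
    rw [Real.sin_neg] at him
    linarith
  have h6 : z^4+z^3+z^2+z+1 = 0 := by
    have hfac : (z - 1) * (z^4+z^3+z^2+z+1) = 0 := by linear_combination h3
    rcases mul_eq_zero.mp hfac with h | h
    · exact absurd (sub_eq_zero.mp h) hz_ne
    · exact h
  have hw : Complex.exp (3 * Real.pi * Complex.I / 5) = -z^3 := by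
    rw [hz3, show (3 * (Real.pi:ℂ) * Complex.I / 5) = ((-(2*Real.pi/5) : ℝ) : ℂ) * Complex.I + (Real.pi:ℂ)*Complex.I by push_cast; ring,
      Complex.exp_add, Complex.exp_pi_mul_I]
    ring
  -- S² = A
  have h2 : (((Real.sqrt goldenRatio'⁻¹ : ℝ) : ℂ))^2 = ((goldenRatio'⁻¹ : ℝ) : ℂ) := by
    have : Real.sqrt goldenRatio'⁻¹ ^ 2 = goldenRatio'⁻¹ :=
      Real.sq_sqrt (inv_nonneg.mpr hg_pos.le)
    exact_mod_cast congrArg (Complex.ofReal) this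
  -- unitarity of R
  have hzu : z * (starRingEnd ℂ) z = 1 := by
    apply exp_mul_conj_self
    simp [Complex.conj_I, map_div₀, map_ofNat]
    ring
  have hwu : Complex.exp (3 * Real.pi * Complex.I / 5) *
      (starRingEnd ℂ) (Complex.exp (3 * Real.pi * Complex.I / 5)) = 1 := by
    apply exp_mul_conj_self
    simp [Complex.conj_I, map_div₀, map_ofNat]
    ring
  have hR : fibR ∈ Matrix.unitaryGroup (Fin 2) ℂ := R_unitary _ _ hzu hwu
  -- unitarity of F
  have hreal : goldenRatio'⁻¹ * goldenRatio'⁻¹ + Real.sqrt goldenRatio'⁻¹ * Real.sqrt goldenRatio'⁻¹ = 1 := by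
    have hsq : Real.sqrt goldenRatio'⁻¹ * Real.sqrt goldenRatio'⁻¹ = goldenRatio'⁻¹ :=
      Real.mul_self_sqrt (inv_nonneg.mpr hg_pos.le)
    rw [hsq, hginv]
    nlinarith [hs5]
  have hFmat : fibFC = !![((goldenRatio'⁻¹ : ℝ) : ℂ), ((Real.sqrt goldenRatio'⁻¹ : ℝ) : ℂ);
      ((Real.sqrt goldenRatio'⁻¹ : ℝ) : ℂ), -((goldenRatio'⁻¹ : ℝ) : ℂ)] := by
    rw [fibFC, Complex.ofReal_inv]
  have hF : fibFC ∈ Matrix.unitaryGroup (Fin 2) ℂ := by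
    rw [hFmat]
    exact F_unitary _ _ hreal
  refine ⟨hR, mul_mem (mul_mem hF hR) hF, ?_⟩
  have hRmat : fibR = !![z, 0; 0, -z^3] := by rw [fibR, hw, hz_def]
  rw [fibB, hFmat, hRmat]
  exact braid_key _ _ _ _ h2 h3 h6 h7 rfl
end
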